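/- For $h\in(0,1/2]$ and $q\in(0,1]$ let $c_k(h,q)=\sqrt{1-\exp\big(-\tfrac{2h^2}{1-h}(qk^2+\tfrac{1}{q})\big)}\,\exp\big(-hqk^2-\tfrac{h}{q}\big)$ for $k\in\mathbb{Z}$. Then for every fixed $q\in(0,1]$, $\lim_{h\to 0^+}\; h\cdot\frac{\sum_{k\in\mathbb{Z}}k^2 c_k(h,q)^2}{\sum_{k\in\mathbb{Z}}c_k(h,q)^2} = \frac{3}{4q}$. -/

import Mathlib

open Filter

noncomputable section

/-- The coefficients `c_k(h,q) = √(1-exp(-(2h²/(1-h))(qk²+1/q)))·exp(-hqk²-h/q)`. -/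
def ck (h q : ℝ) (k : ℤ) : ℝ :=
  Real.sqrt (1 - Real.exp (-(2 * h ^ 2 / (1 - h) * (q * (k:ℝ) ^ 2 + 1 / q)))) *
    Real.exp (-(h * q * (k:ℝ) ^ 2) - h / q)

open Real MeasureTheory Set Topology intervalIntegral

/-- Half-line Gaussian moment. -/
def G (n : ℕ) : ℝ := ∫ x in Ioi (0:ℝ), x ^ n * Real.exp (-x ^ 2)

lemma G_integrable (n : ℕ) : IntegrableOn (fun x : ℝ => x ^ n * Real.exp (-x ^ 2)) (Ioi 0) := by
  have h := integrableOn_rpow_mul_exp_neg_mul_sq (b := 1) one_pos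
    (s := (n:ℝ)) (by exact lt_of_lt_of_le neg_one_lt_zero (Nat.cast_nonneg n))
  refine h.congr_fun (fun x _ => ?_) measurableSet_Ioi
  beta_reduce
  rw [Real.rpow_natCast, neg_one_mul]

lemma exp_sq_tendsto (n : ℕ) :
    Tendsto (fun x : ℝ => x ^ n * Real.exp (-x ^ 2)) atTop (𝓝 0) := by
  have h1 : Tendsto (fun x : ℝ => x ^ 2) atTop atTop := tendsto_pow_atTop two_ne_zero
  have h2 := (tendsto_pow_mul_exp_neg_atTop_nhds_zero n).comp h1
  apply squeeze_zero_norm' _ h2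
  filter_upwards [eventually_ge_atTop (1:ℝ)] with x hx
  have hx0 : (0:ℝ) ≤ x := le_trans zero_le_one hx
  have : x ^ n ≤ (x ^ 2) ^ n := by
    apply pow_le_pow_left₀ hx0
    nlinarith
  simp only [Function.comp, norm_mul, norm_pow, Real.norm_eq_abs,
    abs_of_nonneg hx0, abs_of_nonneg (Real.exp_nonneg _)]
  exact mul_le_mul_of_nonneg_right this (Real.exp_nonneg _)

lemma G_succ_succ (n : ℕ) : G (n + 2) = (n + 1) / 2 * G n := by
  have key : ∫ x in Ioi (0:ℝ),
      (x ^ (n+2) * Real.exp (-x ^ 2) - (n+1)/2 * (x ^ n * Real.exp (-x ^ 2))) = 0 := by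
    have hderiv : ∀ x ∈ Ici (0:ℝ), HasDerivAt (fun x : ℝ => -(x ^ (n+1) * Real.exp (-x ^ 2)) / 2)
        (x ^ (n+2) * Real.exp (-x ^ 2) - (n+1)/2 * (x ^ n * Real.exp (-x ^ 2))) x := by
      intro x _
      have h1 : HasDerivAt (fun x : ℝ => x ^ (n+1)) ((n+1) * x ^ n) x := by
        simpa using hasDerivAt_pow (n+1) x
      have h2 : HasDerivAt (fun x : ℝ => Real.exp (-x ^ 2)) (-(2*x) * Real.exp (-x ^ 2)) x := by
        have h3 : HasDerivAt (fun x : ℝ => -x ^ 2) (-(2*x)) x := by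
          simpa [Pi.neg_def] using (hasDerivAt_pow 2 x).neg
        simpa [mul_comm, Function.comp_def] using (Real.hasDerivAt_exp (-x^2)).comp x h3
      have := ((h1.mul h2).neg).div_const 2
      refine this.congr_deriv ?_
      push_cast
      ring
    have hint : IntegrableOn (fun x : ℝ =>
        x ^ (n+2) * Real.exp (-x ^ 2) - (n+1)/2 * (x ^ n * Real.exp (-x ^ 2))) (Ioi 0) :=
      (G_integrable (n+2)).sub ((G_integrable n).const_mul _)
    have htend : Tendsto (fun x : ℝ => -(x ^ (n+1) * Real.exp (-x ^ 2)) / 2) atTop (𝓝 0) := by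
      simpa using ((exp_sq_tendsto (n+1)).neg).div_const 2
    have := integral_Ioi_of_hasDerivAt_of_tendsto' hderiv hint htend
    simpa using this
  have h2 := integral_sub (G_integrable (n+2)) ((G_integrable n).const_mul (((n:ℝ)+1)/2))
  rw [key, MeasureTheory.integral_const_mul] at h2
  unfold G
  push_cast
  linarith [h2]

lemma G_pos (n : ℕ) : 0 < G n := by
  rw [G, setIntegral_pos_iff_support_of_nonneg_ae _ (G_integrable n)]
  · have : (Function.support fun x : ℝ => x ^ n * Real.exp (-x ^ 2)) ∩ Ioi 0 = Ioi 0 := by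
      ext x
      simp only [Function.mem_support, mem_inter_iff, mem_Ioi, and_iff_right_iff_imp]
      intro hx
      positivity
    rw [this]
    simp
  · filter_upwards [ae_restrict_mem measurableSet_Ioi] with x hx
    have : (0:ℝ) < x := hx
    positivity

lemma G_scale {t : ℝ} (ht : 0 < t) (n : ℕ) :
    Real.sqrt t ^ (n + 1) * ∫ x in Ioi (0:ℝ), x ^ n * Real.exp (-(t * x ^ 2)) = G n := by
  set c := Real.sqrt t with hc
  have hc0 : 0 < c := Real.sqrt_pos.mpr ht
  have hct : c ^ 2 = t := Real.sq_sqrt ht.le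
  have key := integral_comp_mul_left_Ioi (fun y : ℝ => y ^ n * Real.exp (-y ^ 2)) 0 hc0
  simp only [mul_zero, smul_eq_mul] at key
  have e1 : ∀ x : ℝ, (c * x) ^ n * Real.exp (-(c * x) ^ 2)
      = c ^ n * (x ^ n * Real.exp (-(t * x ^ 2))) := by
    intro x
    rw [mul_pow, mul_pow, hct]
    ring
  rw [show (∫ x in Ioi (0:ℝ), (c * x) ^ n * Real.exp (-(c*x) ^ 2))
      = ∫ x in Ioi (0:ℝ), c ^ n * (x ^ n * Real.exp (-(t * x ^ 2))) from
      integral_congr_ae (Eventually.of_forall fun x => e1 x), MeasureTheory.integral_const_mul] at key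
  unfold G
  calc c ^ (n+1) * ∫ x in Ioi (0:ℝ), x ^ n * Real.exp (-(t * x ^ 2))
      = c * (c ^ n * ∫ x in Ioi (0:ℝ), x ^ n * Real.exp (-(t * x ^ 2))) := by ring
    _ = c * (c⁻¹ * ∫ x in Ioi (0:ℝ), x ^ n * Real.exp (-x ^ 2)) := by rw [key]
    _ = ∫ x in Ioi (0:ℝ), x ^ n * Real.exp (-x ^ 2) := by field_simp

/-- Gaussian-type integrand. -/
def fG (t : ℝ) (n : ℕ) (x : ℝ) : ℝ := x ^ n * Real.exp (-(t * x ^ 2))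

/-- Derivative bound integrand. -/
def gbG (t : ℝ) (n : ℕ) (x : ℝ) : ℝ := (n:ℝ) * fG t (n-1) x + 2*t* fG t (n+1) x

lemma fG_cont (t : ℝ) (n : ℕ) : Continuous (fG t n) := by
  unfold fG; fun_prop

lemma gbG_cont (t : ℝ) (n : ℕ) : Continuous (gbG t n) := by
  unfold gbG
  exact (continuous_const.mul (fG_cont t (n-1))).add (continuous_const.mul (fG_cont t (n+1)))

lemma fG_nonneg (t : ℝ) (n : ℕ) {x : ℝ} (hx : 0 ≤ x) : 0 ≤ fG t n x := by
  unfold fG; positivity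

lemma gbG_nonneg (t : ℝ) (n : ℕ) {x : ℝ} (ht : 0 < t) (hx : 0 ≤ x) : 0 ≤ gbG t n x := by
  unfold gbG fG; positivity

lemma J_integrable {t : ℝ} (ht : 0 < t) (m : ℕ) : IntegrableOn (fG t m) (Ioi 0) := by
  have h := integrableOn_rpow_mul_exp_neg_mul_sq (b := t) ht
    (s := (m:ℝ)) (lt_of_lt_of_le neg_one_lt_zero (Nat.cast_nonneg m))
  refine h.congr_fun (fun x _ => ?_) measurableSet_Ioi
  beta_reduce
  rw [fG, Real.rpow_natCast, neg_mul]

lemma gbG_integrable {t : ℝ} (ht : 0 < t) (n : ℕ) : IntegrableOn (gbG t n) (Ioi 0) :=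
  ((J_integrable ht (n-1)).const_mul _).add ((J_integrable ht (n+1)).const_mul _)

lemma fG_hasDeriv (t : ℝ) (n : ℕ) (x : ℝ) : HasDerivAt (fG t n)
    ((n:ℝ) * x^(n-1) * Real.exp (-(t*x^2)) + x^n * (-(2*t*x) * Real.exp (-(t*x^2)))) x := by
  have h1 : HasDerivAt (fun x : ℝ => x ^ n) ((n:ℝ) * x ^ (n-1)) x := hasDerivAt_pow n x
  have h3 : HasDerivAt (fun x : ℝ => -(t * x ^ 2)) (-(2*t*x)) x := by
    have := ((hasDerivAt_pow 2 x).const_mul t).neg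
    refine this.congr_deriv ?_
    push_cast; ring
  have h2 : HasDerivAt (fun x : ℝ => Real.exp (-(t * x ^ 2))) (-(2*t*x) * Real.exp (-(t*x^2))) x := by
    simpa [mul_comm, Function.comp_def] using (Real.hasDerivAt_exp (-(t*x^2))).comp x h3
  exact h1.mul h2

lemma fd_cont (t : ℝ) (n : ℕ) : Continuous (fun x : ℝ =>
    (n:ℝ) * x^(n-1) * Real.exp (-(t*x^2)) + x^n * (-(2*t*x) * Real.exp (-(t*x^2)))) := by
  fun_prop

lemma fd_abs_le {t : ℝ} (n : ℕ) (ht : 0 < t) {x : ℝ} (hx : 0 ≤ x) :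
    |(n:ℝ) * x^(n-1) * Real.exp (-(t*x^2)) + x^n * (-(2*t*x) * Real.exp (-(t*x^2)))|
      ≤ gbG t n x := by
  refine (abs_add_le _ _).trans ?_
  unfold gbG fG
  have e1 : |(n:ℝ) * x^(n-1) * Real.exp (-(t*x^2))| = (n:ℝ) * (x ^ (n-1) * Real.exp (-(t*x^2))) := by
    rw [abs_of_nonneg (by positivity)]; ring
  have e2 : |x^n * (-(2*t*x) * Real.exp (-(t*x^2)))| = 2*t*(x ^ (n+1) * Real.exp (-(t*x^2))) := by
    rw [abs_of_nonpos, pow_succ]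
    · ring
    · have h1 : (0:ℝ) ≤ x ^ n := pow_nonneg hx n
      have h2 : -(2*t*x) * Real.exp (-(t*x^2)) ≤ 0 := by
        rw [neg_mul, neg_nonpos]
        positivity
      exact mul_nonpos_of_nonneg_of_nonpos h1 h2
  rw [e1, e2]

/-- Sum-integral comparison for partial sums. -/
lemma partial_diff_bound {t : ℝ} (n : ℕ) (ht : 0 < t) (N : ℕ) :
    |(∑ k ∈ Finset.range N, fG t n k) - ∫ x in (0:ℝ)..(N:ℝ), fG t n x|
    ≤ ∫ x in Ioi (0:ℝ), gbG t n x := by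
  -- per-interval bound
  have step : ∀ k : ℕ, |fG t n k - ∫ x in (k:ℝ)..((k:ℝ)+1), fG t n x|
      ≤ ∫ x in (k:ℝ)..((k:ℝ)+1), gbG t n x := by
    intro k
    have hk1 : (k:ℝ) ≤ (k:ℝ) + 1 := by linarith
    have hfk : ∀ x ∈ Icc (k:ℝ) ((k:ℝ)+1), |fG t n k - fG t n x|
        ≤ ∫ y in (k:ℝ)..((k:ℝ)+1), gbG t n y := by
      intro x hx
      have hxk : (k:ℝ) ≤ x := hx.1
      have hftc : ∫ y in (k:ℝ)..x, ((n:ℝ) * y^(n-1) * Real.exp (-(t*y^2))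
          + y^n * (-(2*t*y) * Real.exp (-(t*y^2)))) = fG t n x - fG t n k :=
        integral_eq_sub_of_hasDerivAt (fun y _ => fG_hasDeriv t n y)
          ((fd_cont t n).intervalIntegrable _ _)
      rw [abs_sub_comm, ← hftc]
      calc |∫ y in (k:ℝ)..x, ((n:ℝ) * y^(n-1) * Real.exp (-(t*y^2))
            + y^n * (-(2*t*y) * Real.exp (-(t*y^2))))|
          ≤ ∫ y in (k:ℝ)..x, |((n:ℝ) * y^(n-1) * Real.exp (-(t*y^2))
            + y^n * (-(2*t*y) * Real.exp (-(t*y^2))))| := abs_integral_le_integral_abs hxk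
        _ ≤ ∫ y in (k:ℝ)..x, gbG t n y := by
            apply integral_mono_on hxk
            · exact ((fd_cont t n).abs).intervalIntegrable _ _
            · exact (gbG_cont t n).intervalIntegrable _ _
            · intro y hy
              exact fd_abs_le n ht (le_trans (Nat.cast_nonneg k) hy.1)
        _ ≤ ∫ y in (k:ℝ)..((k:ℝ)+1), gbG t n y := by
            apply integral_mono_interval (le_refl (k:ℝ)) hxk hx.2
            · filter_upwards [ae_restrict_mem measurableSet_Ioc] with y hy
              exact gbG_nonneg t n ht (le_trans (Nat.cast_nonneg k) hy.1.le)
            · exact (gbG_cont t n).intervalIntegrable _ _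
    have habs : |fG t n k - ∫ x in (k:ℝ)..((k:ℝ)+1), fG t n x|
        = |∫ x in (k:ℝ)..((k:ℝ)+1), (fG t n k - fG t n x)| := by
      rw [integral_sub intervalIntegrable_const ((fG_cont t n).intervalIntegrable _ _)]
      simp
    rw [habs]
    calc |∫ x in (k:ℝ)..((k:ℝ)+1), (fG t n k - fG t n x)|
        ≤ ∫ x in (k:ℝ)..((k:ℝ)+1), |fG t n k - fG t n x| := abs_integral_le_integral_abs hk1
      _ ≤ ∫ x in (k:ℝ)..((k:ℝ)+1), (∫ y in (k:ℝ)..((k:ℝ)+1), gbG t n y) := by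
          apply integral_mono_on hk1
          · exact ((continuous_const.sub (fG_cont t n)).abs).intervalIntegrable _ _
          · exact intervalIntegrable_const
          · exact hfk
      _ = ∫ y in (k:ℝ)..((k:ℝ)+1), gbG t n y := by
          rw [intervalIntegral.integral_const]
          simp
  -- telescoping
  have tele_f : ∑ k ∈ Finset.range N, (∫ x in (k:ℝ)..((k:ℝ)+1), fG t n x)
      = ∫ x in (0:ℝ)..(N:ℝ), fG t n x := by
    have := sum_integral_adjacent_intervals (μ := volume) (a := fun k : ℕ => (k:ℝ)) (n := N)
      (f := fG t n) (fun k _ => (fG_cont t n).intervalIntegrable _ _)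
    simpa using this
  have tele_gb : ∑ k ∈ Finset.range N, (∫ x in (k:ℝ)..((k:ℝ)+1), gbG t n x)
      = ∫ x in (0:ℝ)..(N:ℝ), gbG t n x := by
    have := sum_integral_adjacent_intervals (μ := volume) (a := fun k : ℕ => (k:ℝ)) (n := N)
      (f := gbG t n) (fun k _ => (gbG_cont t n).intervalIntegrable _ _)
    simpa using this
  have gb_le : ∫ x in (0:ℝ)..(N:ℝ), gbG t n x ≤ ∫ x in Ioi (0:ℝ), gbG t n x := by
    rw [integral_of_le (by positivity)]
    apply setIntegral_mono_set (gbG_integrable ht n)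
    · filter_upwards [ae_restrict_mem measurableSet_Ioi] with y hy
      exact gbG_nonneg t n ht (le_of_lt hy)
    · exact Eventually.of_forall Ioc_subset_Ioi_self
  calc |(∑ k ∈ Finset.range N, fG t n k) - ∫ x in (0:ℝ)..(N:ℝ), fG t n x|
      = |∑ k ∈ Finset.range N, (fG t n k - ∫ x in (k:ℝ)..((k:ℝ)+1), fG t n x)| := by
        rw [Finset.sum_sub_distrib, tele_f]
    _ ≤ ∑ k ∈ Finset.range N, |fG t n k - ∫ x in (k:ℝ)..((k:ℝ)+1), fG t n x| :=
        Finset.abs_sum_le_sum_abs _ _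
    _ ≤ ∑ k ∈ Finset.range N, ∫ x in (k:ℝ)..((k:ℝ)+1), gbG t n x :=
        Finset.sum_le_sum (fun k _ => step k)
    _ = ∫ x in (0:ℝ)..(N:ℝ), gbG t n x := tele_gb
    _ ≤ ∫ x in Ioi (0:ℝ), gbG t n x := gb_le

/-- The theta-type sum. -/
def SZ (p : ℕ) (t : ℝ) : ℝ := ∑' k : ℤ, (k:ℝ) ^ (2*p) * Real.exp (-(t * (k:ℝ) ^ 2))

lemma summable_fG_nat {t : ℝ} (ht : 0 < t) (n : ℕ) : Summable (fun k : ℕ => fG t n (k:ℝ)) := by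
  have hr : ‖Real.exp (-t)‖ < 1 := by
    rw [Real.norm_eq_abs, abs_of_pos (Real.exp_pos _)]
    exact Real.exp_lt_one_iff.mpr (neg_neg_iff_pos.mpr ht)
  apply Summable.of_nonneg_of_le (fun k => fG_nonneg' t n k) _
    (summable_pow_mul_geometric_of_norm_lt_one n hr)
  intro k
  unfold fG
  have h1 : Real.exp (-(t * (k:ℝ)^2)) ≤ Real.exp (-t) ^ k := by
    rw [← Real.exp_nat_mul]
    apply Real.exp_le_exp.mpr
    have : (k:ℝ) ≤ (k:ℝ)^2 := by
      exact_mod_cast Nat.le_self_pow two_ne_zero k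
    nlinarith
  calc (k:ℝ)^n * Real.exp (-(t * (k:ℝ)^2)) ≤ (k:ℝ)^n * Real.exp (-t) ^ k :=
        mul_le_mul_of_nonneg_left h1 (by positivity)
    _ = (k:ℝ)^n * Real.exp (-t) ^ k := rfl
where
  fG_nonneg' (t : ℝ) (n : ℕ) (k : ℕ) : 0 ≤ fG t n (k:ℝ) := by unfold fG; positivity

lemma summable_SZ_int {t : ℝ} (ht : 0 < t) (p : ℕ) :
    Summable (fun k : ℤ => (k:ℝ) ^ (2*p) * Real.exp (-(t * (k:ℝ) ^ 2))) := by
  apply Summable.of_nat_of_neg_add_one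
  · exact (summable_fG_nat ht (2*p)).congr (fun k => by push_cast [fG]; ring)
  · refine (((summable_nat_add_iff 1).mpr (summable_fG_nat ht (2*p))).congr (fun k => ?_))
    push_cast [fG]
    rw [show (-((k:ℝ)+1))^(2*p) = ((k:ℝ)+1)^(2*p) from (even_two_mul p).neg_pow _,
      neg_sq]

lemma SZ_split {t : ℝ} (ht : 0 < t) (p : ℕ) :
    SZ p t = 2 * (∑' k : ℕ, fG t (2*p) (k:ℝ)) - fG t (2*p) 0 := by
  set F : ℤ → ℝ := fun k => (k:ℝ)^(2*p) * Real.exp (-(t*(k:ℝ)^2)) with hF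
  set A := ∑' k : ℕ, fG t (2*p) (k:ℝ) with hA
  have e1 : (fun n : ℕ => F (n:ℤ)) = (fun k : ℕ => fG t (2*p) (k:ℝ)) := by
    funext k; simp only [hF, fG]; push_cast; ring
  have e2 : (fun n : ℕ => F (-((n:ℤ) + 1))) = (fun k : ℕ => fG t (2*p) ((k:ℝ)+1)) := by
    funext k; simp only [hF, fG]; push_cast
    rw [show (-((k:ℝ)+1))^(2*p) = ((k:ℝ)+1)^(2*p) from (even_two_mul p).neg_pow _, neg_sq]
  have h2 : HasSum (fun k : ℕ => fG t (2*p) ((k:ℝ)+1)) (A - fG t (2*p) 0) := by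
    have h := (hasSum_nat_add_iff' (f := fun k : ℕ => fG t (2*p) (k:ℝ)) 1).mpr
      (summable_fG_nat ht (2*p)).hasSum
    simpa using h
  have h1 : HasSum (fun n : ℕ => F (n:ℤ)) A := by rw [e1]; exact (summable_fG_nat ht (2*p)).hasSum
  have h2' : HasSum (fun n : ℕ => F (-((n:ℤ) + 1))) (A - fG t (2*p) 0) := by rw [e2]; exact h2
  have htot : HasSum F (A + (A - fG t (2*p) 0)) := h1.of_nat_of_neg_add_one h2'
  have hSZ : SZ p t = A + (A - fG t (2*p) 0) := htot.tsum_eq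
  rw [hSZ]; ring

lemma tendsto_T (p : ℕ) :
    Tendsto (fun t : ℝ => Real.sqrt t ^ (2*p+1) * SZ p t) (𝓝[>] (0:ℝ))
      (𝓝 (2 * G (2*p))) := by
  set n := 2*p with hn
  rw [← tendsto_sub_nhds_zero_iff]
  set C : ℝ := 2*((n:ℝ) * G (n-1) + 2 * G (n+1)) + 1 with hC
  refine squeeze_zero_norm' (a := fun t : ℝ => Real.sqrt t * C) ?_ ?_
  · have hmem : Ioo (0:ℝ) 1 ∈ 𝓝[>] (0:ℝ) := Ioo_mem_nhdsGT_of_mem ⟨le_refl 0, zero_lt_one⟩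
    filter_upwards [hmem] with t htI
    obtain ⟨ht, ht1⟩ := htI
    set s := Real.sqrt t with hs
    have hs0 : 0 < s := Real.sqrt_pos.mpr ht
    have hs1 : s ≤ 1 := by
      rw [hs, show (1:ℝ) = Real.sqrt 1 from (Real.sqrt_one).symm]
      exact Real.sqrt_le_sqrt ht1.le
    set A : ℝ := ∑' k : ℕ, fG t n (k:ℝ) with hA
    set J : ℕ → ℝ := fun m => ∫ x in Ioi (0:ℝ), fG t m x with hJ
    -- |A - J n| ≤ n * J (n-1) + 2t * J (n+1)
    have hAJ : |A - J n| ≤ (n:ℝ) * J (n-1) + 2*t * J (n+1) := by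
      have hWeq : ∫ x in Ioi (0:ℝ), gbG t n x = (n:ℝ) * J (n-1) + 2*t * J (n+1) := by
        unfold gbG
        rw [integral_add ((J_integrable ht (n-1)).const_mul _) ((J_integrable ht (n+1)).const_mul _),
          MeasureTheory.integral_const_mul, MeasureTheory.integral_const_mul]
      have h1 : Tendsto (fun N : ℕ => (∑ k ∈ Finset.range N, fG t n k)
          - ∫ x in (0:ℝ)..(N:ℝ), fG t n x) atTop (𝓝 (A - J n)) := by
        apply Tendsto.sub
        · exact (summable_fG_nat ht n).hasSum.tendsto_sum_nat
        · exact intervalIntegral_tendsto_integral_Ioi 0 (J_integrable ht n)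
            tendsto_natCast_atTop_atTop
      have := le_of_tendsto (h1.abs) (Eventually.of_forall (fun N =>
        (partial_diff_bound n ht N).trans_eq hWeq))
      exact this
    -- scaling identities
    have hid : ∀ m : ℕ, s ^ (m+1) * J m = G m := fun m => G_scale ht m
    have hfG0 : fG t n 0 ≤ 1 := by
      unfold fG
      rw [show -(t * (0:ℝ)^2) = 0 by ring, Real.exp_zero, mul_one]
      rcases Nat.eq_zero_or_pos n with h | h
      · simp [h]
      · rw [zero_pow h.ne']
        exact zero_le_one
    have hfG0' : 0 ≤ fG t n 0 := by unfold fG; positivity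
    have hSZ : SZ p t = 2 * A - fG t n 0 := SZ_split ht p
    have key : s^(n+1) * SZ p t - 2 * G n
        = 2 * (s^(n+1) * (A - J n)) - s^(n+1) * fG t n 0 := by
      rw [hSZ, ← hid n]
      ring
    rw [key]
    have hsp : (0:ℝ) ≤ s^(n+1) := by positivity
    have bound1 : |s^(n+1) * (A - J n)| ≤ s * ((n:ℝ) * G (n-1) + 2 * G (n+1)) := by
      rw [abs_mul, abs_of_nonneg hsp]
      have : s^(n+1) * |A - J n| ≤ s^(n+1) * ((n:ℝ) * J (n-1) + 2*t * J (n+1)) :=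
        mul_le_mul_of_nonneg_left hAJ hsp
      refine this.trans (le_of_eq ?_)
      have e1 : ∀ m : ℕ, s^(m+1) * ((m:ℝ) * J (m-1)) = s * ((m:ℝ) * G (m-1)) := by
        intro m
        cases m with
        | zero => simp
        | succ i =>
          simp only [Nat.add_sub_cancel]
          rw [← hid i]
          ring
      have e2 : s^(n+1) * (2*t * J (n+1)) = s * (2 * G (n+1)) := by
        rw [← hid (n+1)]
        have : t = s * s := (Real.mul_self_sqrt ht.le).symm
        rw [this]
        ring
      calc s^(n+1) * ((n:ℝ) * J (n-1) + 2*t * J (n+1))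
          = s^(n+1) * ((n:ℝ) * J (n-1)) + s^(n+1) * (2*t * J (n+1)) := by ring
        _ = s * ((n:ℝ) * G (n-1)) + s * (2 * G (n+1)) := by rw [e1 n, e2]
        _ = s * ((n:ℝ) * G (n-1) + 2 * G (n+1)) := by ring
    have bound2 : s^(n+1) * fG t n 0 ≤ s := by
      calc s^(n+1) * fG t n 0 ≤ s^(n+1) * 1 := mul_le_mul_of_nonneg_left hfG0 hsp
        _ = s^(n+1) := mul_one _
        _ ≤ s^1 := pow_le_pow_of_le_one hs0.le hs1 (by omega)
        _ = s := pow_one s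
    calc ‖2 * (s^(n+1) * (A - J n)) - s^(n+1) * fG t n 0‖
        ≤ ‖2 * (s^(n+1) * (A - J n))‖ + ‖s^(n+1) * fG t n 0‖ := norm_sub_le _ _
      _ ≤ 2 * (s * ((n:ℝ) * G (n-1) + 2 * G (n+1))) + s := by
          have hX : ‖2 * (s^(n+1) * (A - J n))‖ = 2 * |s^(n+1) * (A - J n)| := by
            rw [Real.norm_eq_abs, abs_mul, abs_two]
          have hY : ‖s^(n+1) * fG t n 0‖ = s^(n+1) * fG t n 0 := by
            rw [Real.norm_eq_abs, abs_of_nonneg (by positivity)]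
          rw [hX, hY]
          linarith [bound1, bound2]
      _ = s * C := by rw [hC]; ring
  · have h0 : Tendsto (fun t : ℝ => Real.sqrt t) (𝓝[>] (0:ℝ)) (𝓝 0) := by
      have := (Real.continuous_sqrt.tendsto' 0 0 Real.sqrt_zero)
      exact this.mono_left nhdsWithin_le_nhds
    simpa using h0.mul_const C

/-- quadratic lower bound for `1 - exp(-x)`. -/
lemma quad_le {x : ℝ} (hx : 0 ≤ x) : x - x^2/2 ≤ 1 - Real.exp (-x) := by
  have hd : ∀ y : ℝ, HasDerivAt (fun z : ℝ => 1 - Real.exp (-z) - z + z^2/2)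
      (Real.exp (-y) - 1 + y) y := by
    intro y
    have h1 : HasDerivAt (fun z : ℝ => Real.exp (-z)) (-Real.exp (-y)) y := by
      simpa [Function.comp_def] using (Real.hasDerivAt_exp (-y)).comp y ((hasDerivAt_id y).neg)
    have h2 := (((hasDerivAt_const y (1:ℝ)).sub h1).sub (hasDerivAt_id y)).add
      ((hasDerivAt_pow 2 y).div_const 2)
    refine h2.congr_deriv ?_
    push_cast
    ring
  have mono : MonotoneOn (fun z : ℝ => 1 - Real.exp (-z) - z + z^2/2) (Ici 0) := by
    apply monotoneOn_of_deriv_nonneg (convex_Ici 0)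
    · exact Continuous.continuousOn (by fun_prop)
    · intro y _
      exact (hd y).differentiableAt.differentiableWithinAt
    · intro y _
      rw [(hd y).deriv]
      have := Real.add_one_le_exp (-y)
      linarith
  have h0 := mono (self_mem_Ici) (hx : x ∈ Ici 0) hx
  simp only [Real.exp_zero] at h0
  norm_num at h0
  linarith

lemma one_sub_exp_le (x : ℝ) : 1 - Real.exp (-x) ≤ x := by
  have := Real.add_one_le_exp (-x)
  linarith

lemma SZ_pos {t : ℝ} (ht : 0 < t) (p : ℕ) : 0 < SZ p t := by
  apply Summable.tsum_pos (summable_SZ_int ht p)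
    (fun k => mul_nonneg ((even_two_mul p).pow_nonneg _) (Real.exp_pos _).le) 1
  simp [Real.exp_pos]

/-- weight polynomial -/
def bq (q : ℝ) (k : ℤ) : ℝ := q * (k:ℝ)^2 + 1/q

lemma bq_pos {q : ℝ} (hq : 0 < q) (k : ℤ) : 0 < bq q k := by
  unfold bq; positivity

lemma hasSum_N0 {q t : ℝ} (ht : 0 < t) :
    HasSum (fun k : ℤ => (k:ℝ)^2 * bq q k * Real.exp (-(t*(k:ℝ)^2)))
      (q * SZ 2 t + (1/q) * SZ 1 t) := by
  have h2 : HasSum (fun k:ℤ => q * ((k:ℝ)^(2*2) * Real.exp (-(t*(k:ℝ)^2)))) (q * SZ 2 t) :=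
    (summable_SZ_int ht 2).hasSum.mul_left q
  have h1 : HasSum (fun k:ℤ => (1/q) * ((k:ℝ)^(2*1) * Real.exp (-(t*(k:ℝ)^2)))) ((1/q) * SZ 1 t) :=
    (summable_SZ_int ht 1).hasSum.mul_left (1/q)
  have e : (fun k:ℤ => q * ((k:ℝ)^(2*2) * Real.exp (-(t*(k:ℝ)^2)))
      + (1/q) * ((k:ℝ)^(2*1) * Real.exp (-(t*(k:ℝ)^2))))
      = (fun k:ℤ => (k:ℝ)^2 * bq q k * Real.exp (-(t*(k:ℝ)^2))) := by
    funext k; unfold bq; ring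
  exact e ▸ (h2.add h1)

lemma hasSum_N1 {q t : ℝ} (hq : 0 < q) (ht : 0 < t) :
    HasSum (fun k : ℤ => (k:ℝ)^2 * bq q k^2 * Real.exp (-(t*(k:ℝ)^2)))
      (q^2 * SZ 3 t + 2 * SZ 2 t + (1/q^2) * SZ 1 t) := by
  have h3 : HasSum (fun k:ℤ => q^2 * ((k:ℝ)^(2*3) * Real.exp (-(t*(k:ℝ)^2)))) (q^2 * SZ 3 t) :=
    (summable_SZ_int ht 3).hasSum.mul_left _
  have h2 : HasSum (fun k:ℤ => (2:ℝ) * ((k:ℝ)^(2*2) * Real.exp (-(t*(k:ℝ)^2)))) (2 * SZ 2 t) :=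
    (summable_SZ_int ht 2).hasSum.mul_left _
  have h1 : HasSum (fun k:ℤ => (1/q^2) * ((k:ℝ)^(2*1) * Real.exp (-(t*(k:ℝ)^2)))) ((1/q^2) * SZ 1 t) :=
    (summable_SZ_int ht 1).hasSum.mul_left _
  have e : (fun k:ℤ => q^2 * ((k:ℝ)^(2*3) * Real.exp (-(t*(k:ℝ)^2)))
      + (2:ℝ) * ((k:ℝ)^(2*2) * Real.exp (-(t*(k:ℝ)^2)))
      + (1/q^2) * ((k:ℝ)^(2*1) * Real.exp (-(t*(k:ℝ)^2))))
      = (fun k:ℤ => (k:ℝ)^2 * bq q k^2 * Real.exp (-(t*(k:ℝ)^2))) := by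
    funext k
    unfold bq
    field_simp
    ring
  exact e ▸ ((h3.add h2).add h1)

lemma hasSum_D0 {q t : ℝ} (ht : 0 < t) :
    HasSum (fun k : ℤ => bq q k * Real.exp (-(t*(k:ℝ)^2)))
      (q * SZ 1 t + (1/q) * SZ 0 t) := by
  have h1 : HasSum (fun k:ℤ => q * ((k:ℝ)^(2*1) * Real.exp (-(t*(k:ℝ)^2)))) (q * SZ 1 t) :=
    (summable_SZ_int ht 1).hasSum.mul_left _
  have h0 : HasSum (fun k:ℤ => (1/q) * ((k:ℝ)^(2*0) * Real.exp (-(t*(k:ℝ)^2)))) ((1/q) * SZ 0 t) :=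
    (summable_SZ_int ht 0).hasSum.mul_left _
  have e : (fun k:ℤ => q * ((k:ℝ)^(2*1) * Real.exp (-(t*(k:ℝ)^2)))
      + (1/q) * ((k:ℝ)^(2*0) * Real.exp (-(t*(k:ℝ)^2))))
      = (fun k:ℤ => bq q k * Real.exp (-(t*(k:ℝ)^2))) := by
    funext k; unfold bq; ring
  exact e ▸ (h1.add h0)

lemma hasSum_D1 {q t : ℝ} (hq : 0 < q) (ht : 0 < t) :
    HasSum (fun k : ℤ => bq q k^2 * Real.exp (-(t*(k:ℝ)^2)))
      (q^2 * SZ 2 t + 2 * SZ 1 t + (1/q^2) * SZ 0 t) := by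
  have h2 : HasSum (fun k:ℤ => q^2 * ((k:ℝ)^(2*2) * Real.exp (-(t*(k:ℝ)^2)))) (q^2 * SZ 2 t) :=
    (summable_SZ_int ht 2).hasSum.mul_left _
  have h1 : HasSum (fun k:ℤ => (2:ℝ) * ((k:ℝ)^(2*1) * Real.exp (-(t*(k:ℝ)^2)))) (2 * SZ 1 t) :=
    (summable_SZ_int ht 1).hasSum.mul_left _
  have h0 : HasSum (fun k:ℤ => (1/q^2) * ((k:ℝ)^(2*0) * Real.exp (-(t*(k:ℝ)^2)))) ((1/q^2) * SZ 0 t) :=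
    (summable_SZ_int ht 0).hasSum.mul_left _
  have e : (fun k:ℤ => q^2 * ((k:ℝ)^(2*2) * Real.exp (-(t*(k:ℝ)^2)))
      + (2:ℝ) * ((k:ℝ)^(2*1) * Real.exp (-(t*(k:ℝ)^2)))
      + (1/q^2) * ((k:ℝ)^(2*0) * Real.exp (-(t*(k:ℝ)^2))))
      = (fun k:ℤ => bq q k^2 * Real.exp (-(t*(k:ℝ)^2))) := by
    funext k
    unfold bq
    field_simp
    ring
  exact e ▸ ((h2.add h1).add h0)

/-- scaled parameters -/
def uu (q h : ℝ) : ℝ := 2*h*q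
def ee (h : ℝ) : ℝ := 2 * h ^ 2 / (1 - h)
def ww (q h : ℝ) : ℝ := 2*h/q

def NN0 (q h : ℝ) : ℝ := q * SZ 2 (uu q h) + (1/q) * SZ 1 (uu q h)
def NN1 (q h : ℝ) : ℝ := q^2 * SZ 3 (uu q h) + 2 * SZ 2 (uu q h) + (1/q^2) * SZ 1 (uu q h)
def DD0 (q h : ℝ) : ℝ := q * SZ 1 (uu q h) + (1/q) * SZ 0 (uu q h)
def DD1 (q h : ℝ) : ℝ := q^2 * SZ 2 (uu q h) + 2 * SZ 1 (uu q h) + (1/q^2) * SZ 0 (uu q h)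
def Ntf (q h : ℝ) : ℝ := ∑' k : ℤ, (k:ℝ) ^ 2 * ck h q k ^ 2
def Dtf (q h : ℝ) : ℝ := ∑' k : ℤ, ck h q k ^ 2

section pointwise
variable {q h : ℝ}

lemma uu_pos (hq : 0 < q) (hh0 : 0 < h) : 0 < uu q h := by unfold uu; positivity

lemma ee_pos (hh0 : 0 < h) (hh1 : h < 1) : 0 < ee h := by
  unfold ee
  have : 0 < 1 - h := by linarith
  positivity

lemma NN0_pos (hq : 0 < q) (hh0 : 0 < h) : 0 < NN0 q h := by
  have hu := uu_pos hq hh0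
  exact add_pos (mul_pos hq (SZ_pos hu 2)) (mul_pos (by positivity) (SZ_pos hu 1))

lemma DD0_pos (hq : 0 < q) (hh0 : 0 < h) : 0 < DD0 q h := by
  have hu := uu_pos hq hh0
  exact add_pos (mul_pos hq (SZ_pos hu 1)) (mul_pos (by positivity) (SZ_pos hu 0))

lemma ck_sq (hq : 0 < q) (hh0 : 0 < h) (hh1 : h < 1) (k : ℤ) :
    ck h q k ^ 2 = (1 - Real.exp (-(ee h * bq q k)))
      * (Real.exp (-(uu q h * (k:ℝ)^2)) * Real.exp (-(ww q h))) := by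
  have h1h : 0 < 1 - h := by linarith
  have harg : 0 ≤ 1 - Real.exp (-(2 * h ^ 2 / (1 - h) * (q * (k:ℝ) ^ 2 + 1 / q))) := by
    have hx : 0 ≤ 2 * h ^ 2 / (1 - h) * (q * (k:ℝ) ^ 2 + 1 / q) := by positivity
    have := Real.exp_le_one_iff.mpr (neg_nonpos.mpr hx)
    linarith
  unfold ck
  rw [mul_pow, Real.sq_sqrt harg, ← Real.exp_nat_mul, ← Real.exp_add]
  unfold ee bq uu ww
  congr 2
  push_cast
  ring

lemma ck_sq_le (hq : 0 < q) (hh0 : 0 < h) (hh1 : h < 1) (k : ℤ) :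
    ck h q k ^ 2 ≤ ee h * Real.exp (-(ww q h))
      * (bq q k * Real.exp (-(uu q h * (k:ℝ)^2))) := by
  rw [ck_sq hq hh0 hh1 k]
  have h1 := one_sub_exp_le (ee h * bq q k)
  have h2 : (0:ℝ) ≤ Real.exp (-(uu q h * (k:ℝ)^2)) * Real.exp (-(ww q h)) := by positivity
  refine le_trans (mul_le_mul_of_nonneg_right h1 h2) (le_of_eq (by ring))

lemma ck_sq_ge (hq : 0 < q) (hh0 : 0 < h) (hh1 : h < 1) (k : ℤ) :
    ee h * Real.exp (-(ww q h)) * (bq q k * Real.exp (-(uu q h * (k:ℝ)^2)))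
      - (ee h)^2/2 * Real.exp (-(ww q h)) * (bq q k^2 * Real.exp (-(uu q h * (k:ℝ)^2)))
      ≤ ck h q k ^ 2 := by
  rw [ck_sq hq hh0 hh1 k]
  have hx : 0 ≤ ee h * bq q k :=
    mul_nonneg (ee_pos hh0 hh1).le (bq_pos hq k).le
  have h1 := quad_le hx
  have h2 : (0:ℝ) ≤ Real.exp (-(uu q h * (k:ℝ)^2)) * Real.exp (-(ww q h)) := by positivity
  refine le_trans (le_of_eq (by ring)) (mul_le_mul_of_nonneg_right h1 h2)

lemma ck_sq_le_N (hq : 0 < q) (hh0 : 0 < h) (hh1 : h < 1) (k : ℤ) :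
    (k:ℝ)^2 * ck h q k ^ 2 ≤ ee h * Real.exp (-(ww q h))
      * ((k:ℝ)^2 * bq q k * Real.exp (-(uu q h * (k:ℝ)^2))) := by
  calc (k:ℝ)^2 * ck h q k ^ 2
      ≤ (k:ℝ)^2 * (ee h * Real.exp (-(ww q h)) * (bq q k * Real.exp (-(uu q h * (k:ℝ)^2)))) :=
        mul_le_mul_of_nonneg_left (ck_sq_le hq hh0 hh1 k) (sq_nonneg ((k:ℝ)))
    _ = ee h * Real.exp (-(ww q h)) * ((k:ℝ)^2 * bq q k * Real.exp (-(uu q h * (k:ℝ)^2))) := by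
        ring

lemma ck_sq_ge_N (hq : 0 < q) (hh0 : 0 < h) (hh1 : h < 1) (k : ℤ) :
    ee h * Real.exp (-(ww q h)) * ((k:ℝ)^2 * bq q k * Real.exp (-(uu q h * (k:ℝ)^2)))
      - (ee h)^2/2 * Real.exp (-(ww q h)) * ((k:ℝ)^2 * bq q k^2 * Real.exp (-(uu q h * (k:ℝ)^2)))
      ≤ (k:ℝ)^2 * ck h q k ^ 2 := by
  calc ee h * Real.exp (-(ww q h)) * ((k:ℝ)^2 * bq q k * Real.exp (-(uu q h * (k:ℝ)^2)))
      - (ee h)^2/2 * Real.exp (-(ww q h)) * ((k:ℝ)^2 * bq q k^2 * Real.exp (-(uu q h * (k:ℝ)^2)))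
      = (k:ℝ)^2 * (ee h * Real.exp (-(ww q h)) * (bq q k * Real.exp (-(uu q h * (k:ℝ)^2)))
        - (ee h)^2/2 * Real.exp (-(ww q h)) * (bq q k^2 * Real.exp (-(uu q h * (k:ℝ)^2)))) := by
        ring
    _ ≤ (k:ℝ)^2 * ck h q k ^ 2 :=
        mul_le_mul_of_nonneg_left (ck_sq_ge hq hh0 hh1 k) (sq_nonneg ((k:ℝ)))

lemma summable_Dt (hq : 0 < q) (hh0 : 0 < h) (hh1 : h < 1) :
    Summable (fun k : ℤ => ck h q k ^ 2) :=
  Summable.of_nonneg_of_le (fun k => sq_nonneg _) (ck_sq_le hq hh0 hh1)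
    (((hasSum_D0 (q := q) (uu_pos hq hh0)).mul_left (ee h * Real.exp (-(ww q h)))).summable)

lemma summable_Nt (hq : 0 < q) (hh0 : 0 < h) (hh1 : h < 1) :
    Summable (fun k : ℤ => (k:ℝ)^2 * ck h q k ^ 2) :=
  Summable.of_nonneg_of_le (fun k => mul_nonneg (sq_nonneg _) (sq_nonneg _))
    (ck_sq_le_N hq hh0 hh1)
    (((hasSum_N0 (q := q) (uu_pos hq hh0)).mul_left (ee h * Real.exp (-(ww q h)))).summable)

lemma Dt_le (hq : 0 < q) (hh0 : 0 < h) (hh1 : h < 1) :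
    Dtf q h ≤ ee h * Real.exp (-(ww q h)) * DD0 q h :=
  hasSum_le (ck_sq_le hq hh0 hh1) (summable_Dt hq hh0 hh1).hasSum
    ((hasSum_D0 (uu_pos hq hh0)).mul_left _)

lemma Dt_ge (hq : 0 < q) (hh0 : 0 < h) (hh1 : h < 1) :
    ee h * Real.exp (-(ww q h)) * DD0 q h
      - (ee h)^2/2 * Real.exp (-(ww q h)) * DD1 q h ≤ Dtf q h :=
  hasSum_le (ck_sq_ge hq hh0 hh1)
    (((hasSum_D0 (uu_pos hq hh0)).mul_left (ee h * Real.exp (-(ww q h)))).sub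
      ((hasSum_D1 hq (uu_pos hq hh0)).mul_left ((ee h)^2/2 * Real.exp (-(ww q h)))))
    (summable_Dt hq hh0 hh1).hasSum

lemma Nt_le (hq : 0 < q) (hh0 : 0 < h) (hh1 : h < 1) :
    Ntf q h ≤ ee h * Real.exp (-(ww q h)) * NN0 q h :=
  hasSum_le (ck_sq_le_N hq hh0 hh1) (summable_Nt hq hh0 hh1).hasSum
    ((hasSum_N0 (uu_pos hq hh0)).mul_left _)

lemma Nt_ge (hq : 0 < q) (hh0 : 0 < h) (hh1 : h < 1) :
    ee h * Real.exp (-(ww q h)) * NN0 q h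
      - (ee h)^2/2 * Real.exp (-(ww q h)) * NN1 q h ≤ Ntf q h :=
  hasSum_le (ck_sq_ge_N hq hh0 hh1)
    (((hasSum_N0 (uu_pos hq hh0)).mul_left (ee h * Real.exp (-(ww q h)))).sub
      ((hasSum_N1 hq (uu_pos hq hh0)).mul_left ((ee h)^2/2 * Real.exp (-(ww q h)))))
    (summable_Nt hq hh0 hh1).hasSum

lemma Dt_pos (hq : 0 < q) (hh0 : 0 < h) (hh1 : h < 1) : 0 < Dtf q h := by
  apply Summable.tsum_pos (summable_Dt hq hh0 hh1) (fun k => sq_nonneg _) 0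
  rw [ck_sq hq hh0 hh1 0]
  have hx : 0 < ee h * bq q 0 := mul_pos (ee_pos hh0 hh1) (bq_pos hq 0)
  have h1 : Real.exp (-(ee h * bq q 0)) < 1 := Real.exp_lt_one_iff.mpr (by linarith)
  have h2 : 0 < Real.exp (-(uu q h * ((0:ℤ):ℝ)^2)) * Real.exp (-(ww q h)) := by positivity
  nlinarith

end pointwise

def TT (q : ℝ) (p : ℕ) (h : ℝ) : ℝ := Real.sqrt (uu q h) ^ (2*p+1) * SZ p (uu q h)
def XX (q h : ℝ) : ℝ := q^2 * TT q 3 h + 2 * uu q h * TT q 2 h + (uu q h)^2 * (1/q^2) * TT q 1 h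
def YY (q h : ℝ) : ℝ := q * TT q 2 h + uu q h * (1/q) * TT q 1 h
def ZZ (q h : ℝ) : ℝ := q * TT q 1 h + uu q h * (1/q) * TT q 0 h
def VV (q h : ℝ) : ℝ := q^2 * TT q 2 h + 2 * uu q h * TT q 1 h + (uu q h)^2 * (1/q^2) * TT q 0 h
def PP (q h : ℝ) : ℝ := Ntf q h / (ee h * Real.exp (-(ww q h)) * NN0 q h)
def QQ (q h : ℝ) : ℝ := Dtf q h / (ee h * Real.exp (-(ww q h)) * DD0 q h)

section ident
variable {q h : ℝ}

lemma XX_eq (hq : 0 < q) (hh0 : 0 < h) :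
    XX q h = Real.sqrt (uu q h) ^ 7 * NN1 q h := by
  have hu := uu_pos hq hh0
  unfold XX NN1 TT
  set s := Real.sqrt (uu q h) with hsdef
  have hs : s^2 = uu q h := Real.sq_sqrt hu.le
  rw [← hs]
  ring

lemma YY_eq (hq : 0 < q) (hh0 : 0 < h) :
    YY q h = Real.sqrt (uu q h) ^ 5 * NN0 q h := by
  have hu := uu_pos hq hh0
  unfold YY NN0 TT
  set s := Real.sqrt (uu q h) with hsdef
  have hs : s^2 = uu q h := Real.sq_sqrt hu.le
  rw [← hs]
  ring

lemma ZZ_eq (hq : 0 < q) (hh0 : 0 < h) :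
    ZZ q h = Real.sqrt (uu q h) ^ 3 * DD0 q h := by
  have hu := uu_pos hq hh0
  unfold ZZ DD0 TT
  set s := Real.sqrt (uu q h) with hsdef
  have hs : s^2 = uu q h := Real.sq_sqrt hu.le
  rw [← hs]
  ring

lemma VV_eq (hq : 0 < q) (hh0 : 0 < h) :
    VV q h = Real.sqrt (uu q h) ^ 5 * DD1 q h := by
  have hu := uu_pos hq hh0
  unfold VV DD1 TT
  set s := Real.sqrt (uu q h) with hsdef
  have hs : s^2 = uu q h := Real.sq_sqrt hu.le
  rw [← hs]
  ring

end ident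

/-- For fixed `q ∈ (0,1]`, `h · (∑ₖ k²c_k²)/(∑ₖ c_k²) → 3/(4q)` as `h → 0⁺`. -/
theorem freq_ratio_tendsto_h (q : ℝ) (hq : q ∈ Set.Ioc (0:ℝ) 1) :
    Tendsto (fun h : ℝ =>
        h * ((∑' k : ℤ, (k:ℝ) ^ 2 * ck h q k ^ 2) / (∑' k : ℤ, ck h q k ^ 2)))
      (nhdsWithin 0 (Set.Ioi 0)) (nhds (3 / (4 * q))) := by
  obtain ⟨hq0, -⟩ := hq
  have hqne : q ≠ 0 := ne_of_gt hq0
  have hmem : Ioo (0:ℝ) (1/2) ∈ 𝓝[>] (0:ℝ) := Ioo_mem_nhdsGT_of_mem ⟨le_refl 0, by norm_num⟩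
  -- u tendsto within
  have huten : Tendsto (fun h : ℝ => uu q h) (𝓝[>] (0:ℝ)) (𝓝[>] (0:ℝ)) := by
    apply tendsto_nhdsWithin_of_tendsto_nhds_of_eventually_within
    · have hcont : Continuous (fun h : ℝ => uu q h) := by unfold uu; fun_prop
      have h0 := hcont.tendsto 0
      rw [show uu q 0 = 0 by unfold uu; ring] at h0
      exact h0.mono_left nhdsWithin_le_nhds
    · filter_upwards [self_mem_nhdsWithin] with h hh
      exact uu_pos hq0 hh
  have hu0 : Tendsto (fun h : ℝ => uu q h) (𝓝[>] (0:ℝ)) (𝓝 0) :=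
    huten.mono_right nhdsWithin_le_nhds
  have hT : ∀ p : ℕ, Tendsto (fun h : ℝ => TT q p h) (𝓝[>] (0:ℝ)) (𝓝 (2 * G (2*p))) :=
    fun p => (tendsto_T p).comp huten
  -- limits of the building blocks
  have hYlim : Tendsto (fun h : ℝ => YY q h) (𝓝[>] (0:ℝ)) (𝓝 (2*q*G 4)) := by
    have h1 := ((hT 2).const_mul q).add ((hu0.mul_const (1/q)).mul (hT 1))
    have e : q * (2*G (2*2)) + 0*(1/q) * (2*G (2*1)) = 2*q*G 4 := by norm_num; ring
    rw [e] at h1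
    exact h1
  have hZlim : Tendsto (fun h : ℝ => ZZ q h) (𝓝[>] (0:ℝ)) (𝓝 (2*q*G 2)) := by
    have h1 := ((hT 1).const_mul q).add ((hu0.mul_const (1/q)).mul (hT 0))
    have e : q * (2*G (2*1)) + 0*(1/q) * (2*G (2*0)) = 2*q*G 2 := by norm_num; ring
    rw [e] at h1
    exact h1
  have hXlim : Tendsto (fun h : ℝ => XX q h) (𝓝[>] (0:ℝ)) (𝓝 (2*q^2*G 6)) := by
    have h1 := (((hT 3).const_mul (q^2)).add ((hu0.const_mul 2).mul (hT 2))).add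
      (((hu0.pow 2).mul_const (1/q^2)).mul (hT 1))
    have e : q^2 * (2*G (2*3)) + 2*0 * (2*G (2*2)) + 0^2*(1/q^2) * (2*G (2*1))
        = 2*q^2*G 6 := by norm_num; ring
    rw [e] at h1
    exact h1
  have hVlim : Tendsto (fun h : ℝ => VV q h) (𝓝[>] (0:ℝ)) (𝓝 (2*q^2*G 4)) := by
    have h1 := (((hT 2).const_mul (q^2)).add ((hu0.const_mul 2).mul (hT 1))).add
      (((hu0.pow 2).mul_const (1/q^2)).mul (hT 0))
    have e : q^2 * (2*G (2*2)) + 2*0 * (2*G (2*1)) + 0^2*(1/q^2) * (2*G (2*0))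
        = 2*q^2*G 4 := by norm_num; ring
    rw [e] at h1
    exact h1
  have hG2pos := G_pos 2
  have hG4pos := G_pos 4
  have hG4_eq : G 4 = 3/2 * G 2 := by
    have h := G_succ_succ 2
    norm_num at h
    linarith
  have hYne : (2*q*G 4 : ℝ) ≠ 0 := by positivity
  have hZne : (2*q*G 2 : ℝ) ≠ 0 := by positivity
  -- eps over u tends to zero
  have hEr : Tendsto (fun h : ℝ => ee h / uu q h) (𝓝[>] (0:ℝ)) (𝓝 0) := by
    have hden : Tendsto (fun h : ℝ => (1-h)*q) (𝓝[>] (0:ℝ)) (𝓝 q) := by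
      have hcont : Continuous (fun h : ℝ => (1-h)*q) := by fun_prop
      have h0 := hcont.tendsto 0
      norm_num at h0
      exact h0.mono_left nhdsWithin_le_nhds
    have hnum : Tendsto (fun h : ℝ => h) (𝓝[>] (0:ℝ)) (𝓝 0) :=
      tendsto_id.mono_right nhdsWithin_le_nhds
    have hdiv := hnum.div hden hqne
    rw [zero_div] at hdiv
    refine Tendsto.congr' ?_ hdiv
    filter_upwards [hmem] with h hh
    obtain ⟨hh0, hh1⟩ := hh
    have h1 : (1:ℝ) - h ≠ 0 := by
      have : h < 1 := by linarith
      intro hc; nlinarith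
    have h2 : h ≠ 0 := ne_of_gt hh0
    unfold ee uu
    simp only [Pi.div_apply]
    field_simp
  -- squeeze limits for P and Q
  have hPl : Tendsto (fun h : ℝ => 1 - (ee h / uu q h) * (XX q h / YY q h) / 2)
      (𝓝[>] (0:ℝ)) (𝓝 1) := by
    have h1 := (hEr.mul (hXlim.div hYlim hYne)).div_const 2
    have h2 := (tendsto_const_nhds (x := (1:ℝ)) (f := 𝓝[>] (0:ℝ))).sub h1
    rw [show (1:ℝ) - 0 * (2*q^2*G 6 / (2*q*G 4)) / 2 = 1 by ring] at h2
    exact h2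
  have hQl : Tendsto (fun h : ℝ => 1 - (ee h / uu q h) * (VV q h / ZZ q h) / 2)
      (𝓝[>] (0:ℝ)) (𝓝 1) := by
    have h1 := (hEr.mul (hVlim.div hZlim hZne)).div_const 2
    have h2 := (tendsto_const_nhds (x := (1:ℝ)) (f := 𝓝[>] (0:ℝ))).sub h1
    rw [show (1:ℝ) - 0 * (2*q^2*G 4 / (2*q*G 2)) / 2 = 1 by ring] at h2
    exact h2
  have hRlim : Tendsto (fun h : ℝ => 1/(2*q) * (YY q h / ZZ q h))
      (𝓝[>] (0:ℝ)) (𝓝 (3/(4*q))) := by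
    have h1 := (hYlim.div hZlim hZne).const_mul (1/(2*q))
    rw [show 1/(2*q) * ((2*q*G 4) / (2*q*G 2)) = 3/(4*q) from by
      rw [hG4_eq]; field_simp; ring] at h1
    exact h1
  -- eventual bounds
  have hPQev : ∀ᶠ h in 𝓝[>] (0:ℝ),
      (1 - (ee h / uu q h) * (XX q h / YY q h) / 2 ≤ PP q h ∧ PP q h ≤ 1)
      ∧ (1 - (ee h / uu q h) * (VV q h / ZZ q h) / 2 ≤ QQ q h ∧ QQ q h ≤ 1) := by
    filter_upwards [hmem] with h hh
    obtain ⟨hh0, hh1⟩ := hh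
    have hh1' : h < 1 := by linarith
    have hu := uu_pos (h := h) hq0 hh0
    have hε := ee_pos hh0 hh1'
    have hW : (0:ℝ) < Real.exp (-(ww q h)) := Real.exp_pos _
    have hN0 := NN0_pos (h := h) hq0 hh0
    have hD0 := DD0_pos (h := h) hq0 hh0
    have hs0 : 0 < Real.sqrt (uu q h) := Real.sqrt_pos.mpr hu
    have hsq : Real.sqrt (uu q h) ^ 2 = uu q h := Real.sq_sqrt hu.le
    have hdenN : 0 < ee h * Real.exp (-(ww q h)) * NN0 q h := by positivity
    have hdenD : 0 < ee h * Real.exp (-(ww q h)) * DD0 q h := by positivity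
    refine ⟨⟨?_, ?_⟩, ?_, ?_⟩
    · have heq : 1 - (ee h / uu q h) * (XX q h / YY q h) / 2
          = (ee h * Real.exp (-(ww q h)) * NN0 q h
            - (ee h)^2/2 * Real.exp (-(ww q h)) * NN1 q h)
            / (ee h * Real.exp (-(ww q h)) * NN0 q h) := by
        rw [XX_eq hq0 hh0, YY_eq hq0 hh0]
        set s := Real.sqrt (uu q h) with hsdef
        rw [← hsq]
        field_simp
      rw [heq]
      unfold PP
      exact (div_le_div_iff_of_pos_right hdenN).mpr (Nt_ge hq0 hh0 hh1')
    · unfold PP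
      rw [div_le_one hdenN]
      exact Nt_le hq0 hh0 hh1'
    · have heq : 1 - (ee h / uu q h) * (VV q h / ZZ q h) / 2
          = (ee h * Real.exp (-(ww q h)) * DD0 q h
            - (ee h)^2/2 * Real.exp (-(ww q h)) * DD1 q h)
            / (ee h * Real.exp (-(ww q h)) * DD0 q h) := by
        rw [VV_eq hq0 hh0, ZZ_eq hq0 hh0]
        set s := Real.sqrt (uu q h) with hsdef
        rw [← hsq]
        field_simp
      rw [heq]
      unfold QQ
      exact (div_le_div_iff_of_pos_right hdenD).mpr (Dt_ge hq0 hh0 hh1')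
    · unfold QQ
      rw [div_le_one hdenD]
      exact Dt_le hq0 hh0 hh1'
  have hPlim : Tendsto (fun h : ℝ => PP q h) (𝓝[>] (0:ℝ)) (𝓝 1) :=
    tendsto_of_tendsto_of_tendsto_of_le_of_le' hPl tendsto_const_nhds
      (hPQev.mono fun h hh => hh.1.1) (hPQev.mono fun h hh => hh.1.2)
  have hQlim : Tendsto (fun h : ℝ => QQ q h) (𝓝[>] (0:ℝ)) (𝓝 1) :=
    tendsto_of_tendsto_of_tendsto_of_le_of_le' hQl tendsto_const_nhds
      (hPQev.mono fun h hh => hh.2.1) (hPQev.mono fun h hh => hh.2.2)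
  -- final combination
  have hfinal := (hRlim.mul hPlim).div hQlim one_ne_zero
  rw [show (3/(4*q) * 1 / 1 : ℝ) = 3/(4*q) by ring] at hfinal
  refine Tendsto.congr' ?_ hfinal
  filter_upwards [hmem] with h hh
  obtain ⟨hh0, hh1⟩ := hh
  have hh1' : h < 1 := by linarith
  have hu := uu_pos (h := h) hq0 hh0
  have hε := ee_pos hh0 hh1'
  have hW : (0:ℝ) < Real.exp (-(ww q h)) := Real.exp_pos _
  have hN0 := NN0_pos (h := h) hq0 hh0
  have hD0 := DD0_pos (h := h) hq0 hh0
  have hDt := Dt_pos hq0 hh0 hh1'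
  have hs0 : 0 < Real.sqrt (uu q h) := Real.sqrt_pos.mpr hu
  have hsq : Real.sqrt (uu q h) ^ 2 = uu q h := Real.sq_sqrt hu.le
  show 1/(2*q) * (YY q h / ZZ q h) * PP q h / QQ q h = h * (Ntf q h / Dtf q h)
  calc 1/(2*q) * (YY q h / ZZ q h) * PP q h / QQ q h
      = Real.sqrt (uu q h) ^ 2 / (2*q) * (Ntf q h / Dtf q h) := by
        rw [YY_eq hq0 hh0, ZZ_eq hq0 hh0]
        unfold PP QQ
        set s := Real.sqrt (uu q h) with hsdef
        field_simp
    _ = h * (Ntf q h / Dtf q h) := by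
        rw [hsq, show uu q h = 2*h*q from rfl]
        congr 1
        field_simp
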